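/- Let n : ℕ and let G be an n-qubit stabilizer group with stabilizer state ρ_G. For every ε ∈ {1,-1} and a b : Fin n → ZMod 2, the signed Pauli ε • P(a,b) is (the underlying matrix of) an element of G if and only if trace ((ε • P(a,b)) * ρ_G) = 1. Consequently, the map G ↦ ρ_G is injective on n-qubit stabilizer groups: if G₁ ≠ G₂ then ρ_{G₁} ≠ ρ_{G₂}. -/
import Mathlib


open Matrix
lemma zmod2_cases (s : ZMod 2) : s = 0 ∨ s = 1 := by revert s; decide
lemma chi_add (s t : ZMod 2) : ((-1:ℂ))^(s+t).val = (-1)^s.val * (-1)^t.val := by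
  have h2 : ZMod.val (2 : ZMod 2) = 0 := rfl
  rcases zmod2_cases s with h | h <;> rcases zmod2_cases t with h' | h' <;> subst h <;> subst h' <;>
    norm_num [h2, show ZMod.val (0:ZMod 2) = 0 from rfl, show ZMod.val (1:ZMod 2) = 1 from rfl]

lemma chi_sum {ι : Type*} (s : Finset ι) (f : ι → ZMod 2) :
    ((-1:ℂ))^(∑ j ∈ s, f j).val = ∏ j ∈ s, (-1:ℂ)^(f j).val := by
  classical
  induction s using Finset.induction with
  | empty => simp [show ZMod.val (0:ZMod 2) = 0 from rfl]
  | @insert a s' h ih => rw [Finset.sum_insert h, Finset.prod_insert h, chi_add, ih]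

lemma char_sum (n : ℕ) (c : Fin n → ZMod 2) :
    ∑ x : Fin n → ZMod 2, ((-1:ℂ))^((∑ j, c j * x j : ZMod 2)).val
      = if c = 0 then (2:ℂ)^n else 0 := by
  classical
  have key : ∀ x : Fin n → ZMod 2, ((-1:ℂ))^((∑ j, c j * x j : ZMod 2)).val
      = ∏ j, (-1:ℂ)^(c j * x j).val := fun x => chi_sum _ _
  rw [Finset.sum_congr rfl (fun x _ => key x), ← Fintype.piFinset_univ,
    ← Finset.prod_univ_sum (fun _ => Finset.univ) (fun j t => (-1:ℂ)^(c j * t).val)]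
  by_cases hc : c = 0
  · subst hc
    simp [show ∀ t : ZMod 2, (0:ZMod 2) * t = 0 from fun t => by ring,
      show ZMod.val (0:ZMod 2) = 0 from rfl, show (Finset.univ : Finset (ZMod 2)).card = 2 from rfl]
  · rw [if_neg hc]
    obtain ⟨j, hj⟩ : ∃ j, c j ≠ 0 := by
      by_contra h; push_neg at h; exact hc (funext h)
    apply Finset.prod_eq_zero (Finset.mem_univ j)
    have hcj : c j = 1 := (zmod2_cases (c j)).resolve_left hj
    have : (Finset.univ : Finset (ZMod 2)) = {0, 1} := by decide
    rw [this, Finset.sum_insert (by decide), Finset.sum_singleton, hcj]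
    norm_num [show ZMod.val (0:ZMod 2) = 0 from rfl, show ZMod.val (1:ZMod 2) = 1 from rfl,
      show (1:ZMod 2) * 0 = 0 from rfl, show (1:ZMod 2) * 1 = 1 from rfl]


/-- The unsigned `n`-qubit Pauli-type matrix `W(a,b)`. -/
noncomputable def W (n : ℕ) (a b : Fin n → ZMod 2) :
    Matrix (Fin n → ZMod 2) (Fin n → ZMod 2) ℂ :=
  fun x y => if x = y + a then (-1 : ℂ) ^ (∑ j, b j * y j : ZMod 2).val else 0

/-- The Hermitian `n`-qubit Pauli `P(a,b) = I^{m(a,b)} • W(a,b)`. -/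
noncomputable def PauliP (n : ℕ) (a b : Fin n → ZMod 2) :
    Matrix (Fin n → ZMod 2) (Fin n → ZMod 2) ℂ :=
  Complex.I ^ (Finset.univ.filter fun j => a j = 1 ∧ b j = 1).card • W n a b

/-- An `n`-qubit stabilizer group: a commutative subgroup of the units of the matrix
ring all of whose elements are signed Hermitian Paulis, avoiding `-1`, of order `2^n`. -/
def IsStabilizerGroup (n : ℕ)
    (G : Subgroup (Matrix (Fin n → ZMod 2) (Fin n → ZMod 2) ℂ)ˣ) : Prop :=
  (∀ g ∈ G, ∀ h ∈ G, g * h = h * g) ∧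
  (∀ g ∈ G, ∃ (ε : ℂ) (a b : Fin n → ZMod 2), (ε = 1 ∨ ε = -1) ∧
    (g : Matrix (Fin n → ZMod 2) (Fin n → ZMod 2) ℂ) = ε • PauliP n a b) ∧
  (-1 : (Matrix (Fin n → ZMod 2) (Fin n → ZMod 2) ℂ)ˣ) ∉ G ∧
  Nat.card G = 2 ^ n

/-- The stabilizer state `ρ_G = 2^{-n} ∑_{g ∈ G} g` of a stabilizer group `G`. -/
noncomputable def stabState (n : ℕ)
    (G : Subgroup (Matrix (Fin n → ZMod 2) (Fin n → ZMod 2) ℂ)ˣ) :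
    Matrix (Fin n → ZMod 2) (Fin n → ZMod 2) ℂ :=
  ((2 : ℂ) ^ n)⁻¹ • ∑ᶠ g ∈ (G : Set (Matrix (Fin n → ZMod 2) (Fin n → ZMod 2) ℂ)ˣ),
    (g : Matrix (Fin n → ZMod 2) (Fin n → ZMod 2) ℂ)


lemma W_mul (n : ℕ) (a b a' b' : Fin n → ZMod 2) :
    W n a b * W n a' b' =
      ((-1:ℂ)^((∑ j, b j * a' j : ZMod 2)).val) • W n (a + a') (b + b') := by
  classical
  ext x z
  simp only [Matrix.mul_apply, W, Matrix.smul_apply, smul_eq_mul]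
  rw [Finset.sum_congr rfl (fun y _ => by
    rw [show (if x = y + a then (-1 : ℂ) ^ (∑ j, b j * y j : ZMod 2).val else 0) *
        (if y = z + a' then (-1 : ℂ) ^ (∑ j, b' j * z j : ZMod 2).val else 0)
      = if y = z + a' then ((if x = y + a then (-1 : ℂ) ^ (∑ j, b j * y j : ZMod 2).val else 0) *
          (-1 : ℂ) ^ (∑ j, b' j * z j : ZMod 2).val) else 0 from by
        by_cases h : y = z + a' <;> simp [h]])]
  rw [Finset.sum_ite_eq' Finset.univ (z + a')]
  simp only [Finset.mem_univ, if_true]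
  have hcond : (x = z + a' + a) ↔ (x = z + (a + a')) := by
    constructor <;> intro h <;> rw [h] <;> abel
  by_cases h : x = z + (a + a')
  · rw [if_pos (hcond.mpr h), if_pos h]
    have : (∑ j, b j * (z + a') j : ZMod 2) = (∑ j, b j * z j) + (∑ j, b j * a' j) := by
      rw [← Finset.sum_add_distrib]; exact Finset.sum_congr rfl fun j _ => by
        simp [Pi.add_apply, mul_add]
    rw [this, chi_add]
    have : (∑ j, (b + b') j * z j : ZMod 2) = (∑ j, b j * z j) + (∑ j, b' j * z j) := by
      rw [← Finset.sum_add_distrib]; exact Finset.sum_congr rfl fun j _ => by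
        simp [Pi.add_apply, add_mul]
    rw [this, chi_add]; ring
  · rw [if_neg (fun hh => h (hcond.mp hh)), if_neg h]; ring

lemma trace_W (n : ℕ) (a b : Fin n → ZMod 2) :
    (W n a b).trace = if a = 0 ∧ b = 0 then (2:ℂ)^n else 0 := by
  classical
  rw [Matrix.trace]
  by_cases ha : a = 0
  · subst ha
    simp only [Matrix.diag, W, add_zero, if_pos rfl, if_true]
    rw [char_sum n b]
    by_cases hb : b = 0 <;> simp [hb]
  · have : ∀ x : Fin n → ZMod 2, (W n a b).diag x = 0 := by
      intro x
      simp only [Matrix.diag, W]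
      rw [if_neg]
      intro h
      exact ha (by have := h; nth_rewrite 1 [show x = x + 0 from by abel] at this
                   exact (add_left_cancel this).symm)
    rw [Finset.sum_congr rfl (fun x _ => this x)]
    simp [ha]

lemma sum_ba (n : ℕ) (a b : Fin n → ZMod 2) :
    (∑ j, b j * a j : ZMod 2)
      = ((Finset.univ.filter fun j => a j = 1 ∧ b j = 1).card : ZMod 2) := by
  classical
  have h : ∀ j, b j * a j = if a j = 1 ∧ b j = 1 then (1 : ZMod 2) else 0 := by
    intro j
    have : ∀ s t : ZMod 2, t * s = if s = 1 ∧ t = 1 then (1:ZMod 2) else 0 := by decide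
    exact this (a j) (b j)
  rw [Finset.sum_congr rfl (fun j _ => h j), Finset.sum_boole]

lemma neg_one_pow_val_natCast (m : ℕ) : ((-1:ℂ))^((m : ZMod 2)).val = (-1:ℂ)^m := by
  rw [ZMod.val_natCast]
  conv_rhs => rw [← Nat.div_add_mod m 2]
  rw [pow_add, pow_mul]
  norm_num

lemma W_zero_zero (n : ℕ) : W n 0 0 = 1 := by
  ext x y
  simp only [W, add_zero, Pi.zero_apply, zero_mul, Finset.sum_const_zero,
    show ZMod.val (0:ZMod 2) = 0 from rfl, pow_zero, Matrix.one_apply]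

lemma P_sq (n : ℕ) (a b : Fin n → ZMod 2) : PauliP n a b * PauliP n a b = 1 := by
  classical
  set m := (Finset.univ.filter fun j => a j = 1 ∧ b j = 1).card with hm
  have haa : a + a = 0 := by funext j; exact CharTwo.add_self_eq_zero _
  have hbb : b + b = 0 := by funext j; exact CharTwo.add_self_eq_zero _
  rw [PauliP, smul_mul_assoc, mul_smul_comm, W_mul, haa, hbb, W_zero_zero,
    sum_ba, neg_one_pow_val_natCast, smul_smul, smul_smul, ← hm]
  rw [show Complex.I ^ m * Complex.I ^ m * (-1:ℂ) ^ m = (Complex.I^2 * (-1))^m from by ring]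
  simp [Complex.I_sq]

lemma trace_P_mul_P (n : ℕ) (a b a' b' : Fin n → ZMod 2) :
    (PauliP n a b * PauliP n a' b').trace = if a = a' ∧ b = b' then (2:ℂ)^n else 0 := by
  classical
  by_cases h : a = a' ∧ b = b'
  · obtain ⟨h1, h2⟩ := h; subst h1; subst h2
    rw [P_sq, if_pos ⟨rfl, rfl⟩, Matrix.trace_one]
    simp [Fintype.card_pi]
  · rw [if_neg h, PauliP, PauliP, smul_mul_assoc, mul_smul_comm, W_mul,
      Matrix.trace_smul, Matrix.trace_smul, Matrix.trace_smul, trace_W]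
    have : ¬(a + a' = 0 ∧ b + b' = 0) := by
      intro ⟨h1, h2⟩
      apply h
      constructor
      · funext j; have := congrFun h1 j
        rcases zmod2_cases (a j) with hj | hj <;> rcases zmod2_cases (a' j) with hj' | hj' <;>
          simp_all <;> revert this <;> decide
      · funext j; have := congrFun h2 j
        rcases zmod2_cases (b j) with hj | hj <;> rcases zmod2_cases (b' j) with hj' | hj' <;>
          simp_all <;> revert this <;> decide
    rw [if_neg this]
    simp

section Main
variable {n : ℕ}
local notation "M" => Matrix (Fin n → ZMod 2) (Fin n → ZMod 2) ℂ

lemma tr_eq (ε ε' : ℂ) (a b a' b' : Fin n → ZMod 2) :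
    ((ε • PauliP n a b) * (ε' • PauliP n a' b')).trace
      = ε * ε' * (if a = a' ∧ b = b' then (2:ℂ)^n else 0) := by
  rw [smul_mul_assoc, mul_smul_comm, smul_smul, Matrix.trace_smul, trace_P_mul_P]
  simp [smul_eq_mul, mul_assoc]

lemma eps_neg {e e' : ℂ} (he : e = 1 ∨ e = -1) (he' : e' = 1 ∨ e' = -1) (hne : e' ≠ e) :
    e' = -e := by
  rcases he with rfl|rfl <;> rcases he' with rfl|rfl
  · exact absurd rfl hne
  · norm_num
  · norm_num
  · exact absurd rfl hne

set_option maxHeartbeats 1000000 in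
lemma main_iff (G : Subgroup (M)ˣ) (hG : IsStabilizerGroup n G)
    (ε : ℂ) (hε : ε = 1 ∨ ε = -1) (a b : Fin n → ZMod 2) :
    (∃ g ∈ G, (g : M) = ε • PauliP n a b) ↔
      ((ε • PauliP n a b) * (((2 : ℂ) ^ n)⁻¹ • ∑ᶠ g ∈ (G : Set (M)ˣ), (g : M))).trace = 1 := by
  classical
  obtain ⟨hcomm, hrep, hneg, hcard⟩ := hG
  haveI : Finite G := Nat.finite_of_card_ne_zero (by rw [hcard]; positivity)
  haveI : Finite (G : Set (M)ˣ) := by exact Set.toFinite _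
  have hGfin : (G : Set (M)ˣ).Finite := Set.toFinite _
  set T := hGfin.toFinset with hTdef
  have hT : ∀ h, h ∈ T ↔ h ∈ G := fun h => by simp [hTdef, Set.Finite.mem_toFinset]
  have hsum : ∑ᶠ g ∈ (G : Set (M)ˣ), (g : M) = ∑ h ∈ T, (h : M) := by
    rw [← hGfin.coe_toFinset, finsum_mem_coe_finset]
  have h2n : (2:ℂ)^n ≠ 0 := pow_ne_zero n two_ne_zero
  have hε2 : ε * ε = 1 := by rcases hε with h|h <;> subst h <;> ring
  rw [hsum, Matrix.mul_smul, Matrix.trace_smul, Finset.mul_sum, Matrix.trace_sum, smul_eq_mul]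
  constructor
  · rintro ⟨g, hgG, hg⟩
    have claim : ∀ h ∈ T, ((ε • PauliP n a b) * (h : M)).trace
        = if (h : M) = ε • PauliP n a b then (2:ℂ)^n else 0 := by
      intro h hh
      by_cases hc : (h : M) = ε • PauliP n a b
      · rw [if_pos hc, hc, tr_eq]
        simp [hε2]
      · rw [if_neg hc]
        obtain ⟨ε', a', b', hε', hrep'⟩ := hrep h ((hT h).mp hh)
        rw [hrep', tr_eq]
        by_cases hab : a = a' ∧ b = b'
        · exfalso
          obtain ⟨ha, hb⟩ := hab
          subst ha; subst hb
          have hne2 : ε' ≠ ε := fun he => hc (by rw [hrep', he])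
          have hε'' : ε' = -ε := eps_neg hε hε' hne2
          apply hneg
          have hval : ((g * h : (M)ˣ) : M) = -1 := by
            rw [Units.val_mul, hg, hrep', hε'', smul_mul_assoc, mul_smul_comm, smul_smul, P_sq]
            rcases hε with h1|h1 <;> subst h1 <;> norm_num
          have : g * h = -1 := Units.ext (by rw [hval, Units.val_neg, Units.val_one])
          rw [← this]
          exact mul_mem hgG ((hT h).mp hh)
        · rw [if_neg hab, mul_zero]
    rw [Finset.sum_congr rfl claim, ← Finset.sum_filter]
    have hfil : T.filter (fun u : (M)ˣ => (u : M) = ε • PauliP n a b) = ({g} : Finset (M)ˣ) := by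
      ext u
      simp only [Finset.mem_filter, Finset.mem_singleton]
      constructor
      · rintro ⟨-, hh⟩
        exact Units.ext (by rw [hh, hg])
      · rintro rfl
        exact ⟨(hT _).mpr hgG, hg⟩
    rw [hfil, Finset.sum_singleton, inv_mul_cancel₀ h2n]
  · intro htr
    by_contra hno
    have claim : ∀ h ∈ T, ((ε • PauliP n a b) * (h : M)).trace
        = if (h : M) = (-ε) • PauliP n a b then -((2:ℂ)^n) else 0 := by
      intro h hh
      by_cases hc : (h : M) = (-ε) • PauliP n a b
      · rw [if_pos hc, hc, tr_eq]
        have : ε * -ε = -1 := by rw [mul_neg, hε2]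
        simp [this]
      · rw [if_neg hc]
        obtain ⟨ε', a', b', hε', hrep'⟩ := hrep h ((hT h).mp hh)
        rw [hrep', tr_eq]
        by_cases hab : a = a' ∧ b = b'
        · exfalso
          obtain ⟨ha, hb⟩ := hab
          subst ha; subst hb
          have hne2 : ε' ≠ ε := fun he =>
            hno ⟨h, (hT h).mp hh, by rw [hrep', he]⟩
          have hε'' : ε' = -ε := eps_neg hε hε' hne2
          exact hc (by rw [hrep', hε''])
        · rw [if_neg hab, mul_zero]
    rw [Finset.sum_congr rfl claim, ← Finset.sum_filter] at htr
    set S := T.filter (fun u : (M)ˣ => (u : M) = (-ε) • PauliP n a b) with hS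
    have hcardS : S.card ≤ 1 := by
      apply Finset.card_le_one.mpr
      intro h1 hh1 h2 hh2
      rw [hS, Finset.mem_filter] at hh1 hh2
      exact Units.ext (by rw [hh1.2, hh2.2])
    rw [Finset.sum_const, nsmul_eq_mul] at htr
    rcases Nat.le_one_iff_eq_zero_or_eq_one.mp hcardS with hc | hc
    · rw [hc] at htr; norm_num at htr
    · rw [hc] at htr
      rw [show ((1:ℕ):ℂ) * -((2:ℂ)^n) = -((2:ℂ)^n) from by norm_num, mul_neg,
        inv_mul_cancel₀ h2n] at htr
      norm_num at htr

end Main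

theorem stmt_6 (n : ℕ) :
    (∀ (G : Subgroup (Matrix (Fin n → ZMod 2) (Fin n → ZMod 2) ℂ)ˣ),
      IsStabilizerGroup n G →
      ∀ (ε : ℂ), (ε = 1 ∨ ε = -1) → ∀ (a b : Fin n → ZMod 2),
        ((∃ g ∈ G, (g : Matrix (Fin n → ZMod 2) (Fin n → ZMod 2) ℂ) = ε • PauliP n a b) ↔
          ((ε • PauliP n a b) * stabState n G).trace = 1)) ∧
    (∀ (G₁ G₂ : Subgroup (Matrix (Fin n → ZMod 2) (Fin n → ZMod 2) ℂ)ˣ),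
      IsStabilizerGroup n G₁ → IsStabilizerGroup n G₂ →
      G₁ ≠ G₂ → stabState n G₁ ≠ stabState n G₂) := by
  have main : ∀ (G : Subgroup (Matrix (Fin n → ZMod 2) (Fin n → ZMod 2) ℂ)ˣ),
      IsStabilizerGroup n G →
      ∀ (ε : ℂ), (ε = 1 ∨ ε = -1) → ∀ (a b : Fin n → ZMod 2),
        ((∃ g ∈ G, (g : Matrix (Fin n → ZMod 2) (Fin n → ZMod 2) ℂ) = ε • PauliP n a b) ↔
          ((ε • PauliP n a b) * stabState n G).trace = 1) := by
    intro G hG ε hε a b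
    rw [stabState]
    exact main_iff G hG ε hε a b
  refine ⟨main, ?_⟩
  intro G₁ G₂ h1 h2 hne hρ
  apply hne
  have key : ∀ Gx Gy, IsStabilizerGroup n Gx → IsStabilizerGroup n Gy →
      stabState n Gx = stabState n Gy → Gx ≤ Gy := by
    intro Gx Gy hx hy hxy u hu
    obtain ⟨ε, a, b, hε, hu'⟩ := hx.2.1 u hu
    have h1' := (main Gx hx ε hε a b).mp ⟨u, hu, hu'⟩
    rw [hxy] at h1'
    obtain ⟨g, hg, hgeq⟩ := (main Gy hy ε hε a b).mpr h1'
    have hgu : g = u := Units.ext (by rw [hgeq, hu'])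
    exact hgu ▸ hg
  exact le_antisymm (key G₁ G₂ h1 h2 hρ) (key G₂ G₁ h2 h1 hρ.symm)
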